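/- arXiv:1905.11104 — 4 statements merged into one kernel-verified Lean document; each statement's English description precedes it below -/
import Mathlib

section
/- Let F : ℝ^d → ℝ be a differentiable convex inf-compact function, let c_1, ..., c_n : ℝ^d → ℝ be differentiable convex functions with nonempty feasible set C = {z : c_i(z) ≤ 0 for all i}, let Ψ(z) = Σ_{i=1}^n g(c_i(z)), and let r_t > 0 with r_t → ∞. Let F* = min_{z ∈ C} F(z) and F_t* = min_{z ∈ ℝ^d} [F(z) + r_t Ψ(z)]. Then lim_{t→∞} F_t* = F*. -/
/-!
Having compact sublevel sets, `F` is bounded below. For `a < F*` the compact set `{F ≤ a}`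
misses the feasible set, so the continuous penalty `Ψ` has a positive minimum `δ` on it; once
`r_t δ` exceeds `a - inf F`, every point has penalized value at least `a`. Conversely feasible points are not penalized, so `F_t* ≤ F*` for every `t`.
-/

open Filter Set Topology

/-- The penalty kernel `g(u) = log((e^u + e^{-u})/2)` for `u > 0`, `g(u) = 0` for `u ≤ 0`. -/
noncomputable def penaltyKernel (u : ℝ) : ℝ :=
  if 0 < u then Real.log ((Real.exp u + Real.exp (-u)) / 2) else 0

section Penalization

variable {X : Type*} {F ψ : X → ℝ}

theorem bddBelow_range_add_mul (hF : BddBelow (range F)) (hψ : ∀ x, 0 ≤ ψ x) {ρ : ℝ}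
    (hρ : 0 ≤ ρ) : BddBelow (range fun x => F x + ρ * ψ x) := by
  obtain ⟨m, hm⟩ := hF
  refine ⟨m, ?_⟩
  rintro _ ⟨x, rfl⟩
  linarith [hm ⟨x, rfl⟩, mul_nonneg hρ (hψ x)]

theorem sInf_range_add_mul_le (hF : BddBelow (range F)) (hψ : ∀ x, 0 ≤ ψ x) {ρ : ℝ}
    (hρ : 0 ≤ ρ) (hZ : {x | ψ x = 0}.Nonempty) :
    sInf (range fun x => F x + ρ * ψ x) ≤ sInf (F '' {x | ψ x = 0}) := by
  refine le_csInf (hZ.image F) ?_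
  rintro _ ⟨x, hx, rfl⟩
  replace hx : ψ x = 0 := hx
  simpa [hx] using csInf_le (bddBelow_range_add_mul hF hψ hρ) ⟨x, rfl⟩

variable [TopologicalSpace X]

theorem bddBelow_range_of_isCompact_sublevel [T2Space X]
    (hF : ∀ A, IsCompact {x | F x ≤ A}) : BddBelow (range F) := by
  rcases isEmpty_or_nonempty X with hX | ⟨⟨x₀⟩⟩
  · simp [range_eq_empty]
  have hlsc : LowerSemicontinuous F :=
    lowerSemicontinuous_iff_isClosed_preimage.2 fun A => (hF A).isClosed
  obtain ⟨m, hm⟩ := (hlsc.lowerSemicontinuousOn _).bddBelow_of_isCompact (hF (F x₀))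
  refine ⟨m, ?_⟩
  rintro _ ⟨x, rfl⟩
  rcases le_total (F x) (F x₀) with h | h
  · exact hm ⟨x, h, rfl⟩
  · exact (hm ⟨x₀, le_refl (F x₀), rfl⟩).trans h

theorem eventually_le_sInf_range_add_mul [Nonempty X] {α : Type*} {l : Filter α} {r : α → ℝ}
    (hFbdd : BddBelow (range F)) (hF : ∀ A, IsCompact {x | F x ≤ A}) (hψc : Continuous ψ)
    (hψ : ∀ x, 0 ≤ ψ x) (hr : Tendsto r l atTop) {a : ℝ} (ha : ∀ x, ψ x = 0 → a < F x) :
    ∀ᶠ t in l, a ≤ sInf (range fun x => F x + r t * ψ x) := by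
  obtain ⟨m, hm⟩ := hFbdd
  obtain ⟨δ, hδ, hδa⟩ : ∃ δ > 0, ∀ x, F x ≤ a → δ ≤ ψ x := by
    rcases {x | F x ≤ a}.eq_empty_or_nonempty with hK | hK
    · exact ⟨1, one_pos, fun x hx => absurd hx (eq_empty_iff_forall_notMem.1 hK x)⟩
    obtain ⟨w, hw, hmin⟩ := (hF a).exists_isMinOn hK hψc.continuousOn
    exact ⟨ψ w, (hψ w).lt_of_ne' fun h => (ha w h).not_ge hw, fun x hx => hmin hx⟩
  filter_upwards [hr.eventually_ge_atTop ((a - m) / δ), hr.eventually_ge_atTop 0]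
    with t hrt hr0
  refine le_csInf (range_nonempty _) ?_
  rintro _ ⟨x, rfl⟩
  by_cases hx : F x ≤ a
  · calc a = m + (a - m) / δ * δ := by rw [div_mul_cancel₀ _ hδ.ne']; ring
      _ ≤ F x + r t * ψ x := add_le_add (hm ⟨x, rfl⟩) (mul_le_mul hrt (hδa x hx) hδ.le hr0)
  · linarith [mul_nonneg hr0 (hψ x)]

theorem tendsto_sInf_range_add_mul_of_isCompact_sublevel [T2Space X] {α : Type*}
    {l : Filter α} {r : α → ℝ} (hF : ∀ A, IsCompact {x | F x ≤ A}) (hψc : Continuous ψ)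
    (hψ : ∀ x, 0 ≤ ψ x) (hZ : {x | ψ x = 0}.Nonempty) (hr : Tendsto r l atTop) :
    Tendsto (fun t => sInf (range fun x => F x + r t * ψ x)) l
      (𝓝 (sInf (F '' {x | ψ x = 0}))) := by
  have : Nonempty X := ⟨hZ.some⟩
  have hFbdd := bddBelow_range_of_isCompact_sublevel hF
  refine tendsto_order.2 ⟨fun a ha => ?_, fun a ha => ?_⟩
  · obtain ⟨b, hab, hb⟩ := exists_between ha
    have hbF : ∀ x, ψ x = 0 → b < F x := fun x hx =>
      hb.trans_le (csInf_le (hFbdd.mono (image_subset_range _ _)) ⟨x, hx, rfl⟩)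
    filter_upwards [eventually_le_sInf_range_add_mul hFbdd hF hψc hψ hr hbF] with t ht
    exact hab.trans_le ht
  · filter_upwards [hr.eventually_ge_atTop 0] with t ht
    exact (sInf_range_add_mul_le hFbdd hψ ht hZ).trans_lt ha

end Penalization

theorem penaltyKernel_eq_log_cosh_max (u : ℝ) :
    penaltyKernel u = Real.log (Real.cosh (max u 0)) := by
  unfold penaltyKernel
  split_ifs with h
  · rw [max_eq_left h.le, Real.cosh_eq]
  · rw [max_eq_right (not_lt.1 h), Real.cosh_zero, Real.log_one]

theorem continuous_penaltyKernel : Continuous penaltyKernel := by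
  rw [funext penaltyKernel_eq_log_cosh_max]
  exact (Real.continuous_cosh.comp (continuous_id.max continuous_const)).log
    fun u => (Real.cosh_pos _).ne'

theorem penaltyKernel_nonneg (u : ℝ) : 0 ≤ penaltyKernel u := by
  rw [penaltyKernel_eq_log_cosh_max]
  exact Real.log_nonneg (Real.one_le_cosh _)

theorem penaltyKernel_eq_zero_iff {u : ℝ} : penaltyKernel u = 0 ↔ u ≤ 0 := by
  refine ⟨fun h => not_lt.1 fun hu => ?_, fun hu => by simp [penaltyKernel, not_lt.2 hu]⟩
  have hpos : 0 < Real.log (Real.cosh (max u 0)) :=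
    Real.log_pos (Real.one_lt_cosh.2 (by rw [max_eq_left hu.le]; exact hu.ne'))
  exact hpos.ne' (penaltyKernel_eq_log_cosh_max u ▸ h)

theorem sum_penaltyKernel_eq_zero_iff {ι : Type*} [Fintype ι] {u : ι → ℝ} :
    ∑ i, penaltyKernel (u i) = 0 ↔ ∀ i, u i ≤ 0 := by
  simp [Finset.sum_eq_zero_iff_of_nonneg, penaltyKernel_nonneg, penaltyKernel_eq_zero_iff]

theorem penalized_optimal_values_converge_general
    (d n : ℕ)
    (F : EuclideanSpace ℝ (Fin d) → ℝ)
    (hFinf : ∀ A : ℝ, IsCompact {z : EuclideanSpace ℝ (Fin d) | F z ≤ A})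
    (c : Fin n → EuclideanSpace ℝ (Fin d) → ℝ)
    (hcdiff : ∀ i, Differentiable ℝ (c i))
    (hfeas : ∃ z : EuclideanSpace ℝ (Fin d), ∀ i, c i z ≤ 0)
    (r : ℕ → ℝ) (hrinf : Filter.Tendsto r Filter.atTop Filter.atTop) :
    Filter.Tendsto
      (fun t : ℕ => sInf (Set.range
        (fun z : EuclideanSpace ℝ (Fin d) => F z + r t * (∑ i, penaltyKernel (c i z)))))
      Filter.atTop
      (nhds (sInf (F '' {z : EuclideanSpace ℝ (Fin d) | ∀ i, c i z ≤ 0}))) := by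
  have hfeasible : {z | ∀ i, c i z ≤ 0} = {z | ∑ i, penaltyKernel (c i z) = 0} := by
    ext z
    simp [sum_penaltyKernel_eq_zero_iff]
  rw [hfeasible]
  exact tendsto_sInf_range_add_mul_of_isCompact_sublevel hFinf
    (continuous_finsetSum _ fun i _ => continuous_penaltyKernel.comp (hcdiff i).continuous)
    (fun z => Finset.sum_nonneg fun i _ => penaltyKernel_nonneg _) (hfeasible ▸ hfeas) hrinf

/-- Penalty approximation of optimal values: with `F` differentiable convex inf-compact,
`c_i` differentiable convex with nonempty feasible set, `Ψ(z) = Σ_i g(c_i(z))`, and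
`r_t > 0` with `r_t → ∞`, the penalized optimal values
`F_t* = inf_z [F(z) + r_t Ψ(z)]` converge to `F* = min_{z ∈ C} F(z)`. -/
theorem penalized_optimal_values_converge
    (d n : ℕ) (hd : 1 ≤ d) (hn : 1 ≤ n)
    (F : EuclideanSpace ℝ (Fin d) → ℝ)
    (hFdiff : Differentiable ℝ F) (hFconv : ConvexOn ℝ Set.univ F)
    (hFinf : ∀ A : ℝ, IsCompact {z : EuclideanSpace ℝ (Fin d) | F z ≤ A})
    (c : Fin n → EuclideanSpace ℝ (Fin d) → ℝ)
    (hcdiff : ∀ i, Differentiable ℝ (c i)) (hcconv : ∀ i, ConvexOn ℝ Set.univ (c i))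
    (hfeas : ∃ z : EuclideanSpace ℝ (Fin d), ∀ i, c i z ≤ 0)
    (r : ℕ → ℝ) (hr : ∀ t, 0 < r t) (hrinf : Filter.Tendsto r Filter.atTop Filter.atTop) :
    Filter.Tendsto
      (fun t : ℕ => sInf (Set.range
        (fun z : EuclideanSpace ℝ (Fin d) => F z + r t * (∑ i, penaltyKernel (c i z)))))
      Filter.atTop
      (nhds (sInf (F '' {z : EuclideanSpace ℝ (Fin d) | ∀ i, c i z ≤ 0}))) :=
  penalized_optimal_values_converge_general d n F hFinf c hcdiff hfeas r hrinf
end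

section
/- Suppose the sequence of graphs {G(t)} is B-strongly connected for some B ≥ 1, and Assumptions 1 and 3 hold. If {b_t} is a nonincreasing positive scalar sequence such that Σ_{t=1}^∞ b_t a_t ‖f_i(z_i(t+1)) + r_t ψ_i(z_i(t+1))‖_1 < ∞ for every i ∈ [n] (where ‖·‖_1 is the l¹-norm on ℝ^d), then Σ_{t=0}^∞ b_t ‖z_i(t+1) − x̄(t)‖ < ∞ for every i ∈ [n]. -/
open Finset Matrix

section Spread

variable {ι : Type*} [Fintype ι]

theorem mul_apply_sub_le_of_mem_colStochastic [DecidableEq ι] {P Q : Matrix ι ι ℝ} {δ C : ℝ} {i : ι}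
    (hQ : Q ∈ colStochastic ℝ ι) (hQδ : ∀ k j, δ ≤ Q k j) (hP : ∀ k k', P i k - P i k' ≤ C)
    (j j' : ι) : (P * Q) i j - (P * Q) i j' ≤ (1 - Fintype.card ι * δ) * C := by
  have : Nonempty ι := ⟨i⟩
  obtain ⟨k₀, hk₀⟩ := Finite.exists_min (P i)
  have hcol := sum_col_of_mem_colStochastic hQ
  -- the column sums of `Q` agree, so the minimum of row `i` of `P` may be subtracted
  calc (P * Q) i j - (P * Q) i j' = ∑ k, (P i k - P i k₀) * (Q k j - Q k j') := by
        simp only [mul_apply, mul_sub, sub_mul, sum_sub_distrib, ← mul_sum, hcol]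
        ring
    _ ≤ ∑ k, C * (Q k j - δ) := sum_le_sum fun k _ => by
        nlinarith [mul_nonneg (sub_nonneg.2 (hP k k₀)) (sub_nonneg.2 (hQδ k j)),
          mul_nonneg (sub_nonneg.2 (hk₀ k)) (sub_nonneg.2 (hQδ k j'))]
    _ = (1 - Fintype.card ι * δ) * C := by
        simp only [← mul_sum, sum_sub_distrib, hcol, sum_const, card_univ, nsmul_eq_mul]
        ring

theorem abs_sub_sum_mul_le {M : Matrix ι ι ℝ} {C : ℝ} {i : ι}
    (hM : ∀ j j', M i j - M i j' ≤ C) {ν : ι → ℝ} (hν : ∀ k, 0 ≤ ν k) (hν1 : ∑ k, ν k = 1)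
    (j : ι) : |M i j - ∑ k, ν k * M i k| ≤ C := by
  have hsub : ∀ j₀, ∑ k, ν k * (M i j₀ - M i k) = M i j₀ - ∑ k, ν k * M i k := by
    intro j₀
    simp only [mul_sub, sum_sub_distrib, ← sum_mul, hν1, one_mul]
  have hsub' : ∑ k, ν k * (M i k - M i j) = ∑ k, ν k * M i k - M i j := by
    simp only [mul_sub, sum_sub_distrib, ← sum_mul, hν1, one_mul]
  have hbound : ∀ f : ι → ℝ, (∀ k, f k ≤ C) → ∑ k, ν k * f k ≤ C := fun f hf =>
    calc ∑ k, ν k * f k ≤ ∑ k, ν k * C := by gcongr with k; exacts [hν k, hf k]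
      _ = C := by rw [← sum_mul, hν1, one_mul]
  rw [abs_sub_le_iff, ← hsub, ← hsub']
  exact ⟨hbound _ fun k => hM j k, hbound _ fun k => hM k j⟩

theorem abs_mulVec_sub_mul_sum_le {M : Matrix ι ι ℝ} {μ C : ℝ} {i : ι}
    (hM : ∀ j, |M i j - μ| ≤ C) (v : ι → ℝ) :
    |(M *ᵥ v) i - μ * ∑ j, v j| ≤ C * ∑ j, |v j| := by
  have : (M *ᵥ v) i - μ * ∑ j, v j = ∑ j, (M i j - μ) * v j := by
    simp only [mulVec, dotProduct, sub_mul, sum_sub_distrib, mul_sum]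
  rw [this, mul_sum]
  refine (abs_sum_le_sum_abs _ _).trans (sum_le_sum fun j _ => ?_)
  rw [abs_mul]
  exact mul_le_mul_of_nonneg_right (hM j) (abs_nonneg _)

end Spread

section Transition

variable {R ι : Type*} [Fintype ι] [DecidableEq ι]

/-- `transitionMatrix A s t = A (t - 1) * ⋯ * A s`, and `1` when `t ≤ s`. -/
def transitionMatrix [Semiring R] (A : ℕ → Matrix ι ι R) (s : ℕ) : ℕ → Matrix ι ι R
  | 0 => 1
  | t + 1 => if s ≤ t then A t * transitionMatrix A s t else 1

section Semiring

variable [Semiring R] (A : ℕ → Matrix ι ι R)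

theorem transitionMatrix_of_le {s t : ℕ} (h : t ≤ s) : transitionMatrix A s t = 1 := by
  cases t with
  | zero => rfl
  | succ t => rw [transitionMatrix, if_neg (by omega)]

theorem transitionMatrix_succ {s t : ℕ} (h : s ≤ t) :
    transitionMatrix A s (t + 1) = A t * transitionMatrix A s t := by
  rw [transitionMatrix, if_pos h]

theorem transitionMatrix_trans {s r t : ℕ} (hsr : s ≤ r) (hrt : r ≤ t) :
    transitionMatrix A s t = transitionMatrix A r t * transitionMatrix A s r := by
  induction t, hrt using Nat.le_induction with
  | base => rw [transitionMatrix_of_le A le_rfl, Matrix.one_mul]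
  | succ t hrt ih =>
    rw [transitionMatrix_succ A (hsr.trans hrt), transitionMatrix_succ A hrt, ih, Matrix.mul_assoc]

variable {A}

theorem eq_transitionMatrix_mulVec {v : ℕ → ι → R} (hv : ∀ t, v (t + 1) = A t *ᵥ v t)
    {s t : ℕ} (h : s ≤ t) : v t = transitionMatrix A s t *ᵥ v s := by
  induction t, h using Nat.le_induction with
  | base => rw [transitionMatrix_of_le A le_rfl, one_mulVec]
  | succ t hst ih => rw [hv, ih, transitionMatrix_succ A hst, mulVec_mulVec]

end Semiring

theorem eq_transitionMatrix_mulVec_sub_sum [Ring R] {A : ℕ → Matrix ι ι R} {v e : ℕ → ι → R}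
    (hv : ∀ t, v (t + 1) = A t *ᵥ v t - e t) (t : ℕ) :
    v t = transitionMatrix A 0 t *ᵥ v 0 - ∑ s ∈ range t, transitionMatrix A (s + 1) t *ᵥ e s := by
  induction t with
  | zero => simp [transitionMatrix]
  | succ t ih =>
    have hstep : ∀ s ∈ range t, A t *ᵥ (transitionMatrix A (s + 1) t *ᵥ e s)
        = transitionMatrix A (s + 1) (t + 1) *ᵥ e s := fun s hs => by
      rw [mulVec_mulVec, transitionMatrix_succ A (mem_range.1 hs)]
    rw [hv, ih, mulVec_sub, mulVec_sum, sum_congr rfl hstep, mulVec_mulVec,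
      ← transitionMatrix_succ A (Nat.zero_le t), sum_range_succ, transitionMatrix_of_le A le_rfl,
      one_mulVec, sub_add_eq_sub_sub]

variable [Semiring R] [PartialOrder R] [IsOrderedRing R] {A : ℕ → Matrix ι ι R}

theorem transitionMatrix_mem_colStochastic (hA : ∀ t, A t ∈ colStochastic R ι) (s t : ℕ) :
    transitionMatrix A s t ∈ colStochastic R ι := by
  induction t with
  | zero => exact one_mem _
  | succ t ih =>
    rw [transitionMatrix]
    split_ifs
    exacts [mul_mem (hA t) ih, one_mem _]

theorem sum_eq_sum_of_eq_mulVec (hA : ∀ t, A t ∈ colStochastic R ι) {v : ℕ → ι → R}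
    (hv : ∀ t, v (t + 1) = A t *ᵥ v t) (t : ℕ) : ∑ k, v t k = ∑ k, v 0 k := by
  induction t with
  | zero => rfl
  | succ t ih => rw [hv, sum_mulVec_of_mem_colStochastic (hA t), ih]

end Transition

section Connectivity

variable {ι : Type*} [Fintype ι] [DecidableEq ι]

structure IsMixingOn (A : ℕ → Matrix ι ι ℝ) (E : ℕ → Finset (ι × ι)) (δ : ℝ) : Prop where
  pos : 0 < δ
  mem_colStochastic : ∀ t, A t ∈ colStochastic ℝ ι
  self_mem : ∀ t i, (i, i) ∈ E t
  le_of_mem : ∀ t i j, (j, i) ∈ E t → δ ≤ A t i j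

/-- The graph sequence `E` is `B`-strongly connected. -/
def IsUniformlyStronglyConnected (E : ℕ → Finset (ι × ι)) (B : ℕ) : Prop :=
  ∀ t i j, Relation.ReflTransGen (fun u v => ∃ s, t ≤ s ∧ s < t + B ∧ (u, v) ∈ E s) i j

/-- The nodes holding at least `δ ^ m` of the mass started at `j` at time `s`, `m` steps later. -/
noncomputable def reachSet (A : ℕ → Matrix ι ι ℝ) (δ : ℝ) (s : ℕ) (j : ι) (m : ℕ) : Finset ι :=
  univ.filter fun k => δ ^ m ≤ transitionMatrix A s (s + m) k j

variable {A : ℕ → Matrix ι ι ℝ} {E : ℕ → Finset (ι × ι)} {δ : ℝ} {B s m : ℕ} {j : ι}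

theorem mem_reachSet {k : ι} :
    k ∈ reachSet A δ s j m ↔ δ ^ m ≤ transitionMatrix A s (s + m) k j := by
  simp [reachSet]

theorem self_mem_reachSet_zero : j ∈ reachSet A δ s j 0 := by
  simp [mem_reachSet, transitionMatrix_of_le]

namespace IsMixingOn

theorem mem_reachSet_succ (h : IsMixingOn A E δ) {u v : ι} (hu : u ∈ reachSet A δ s j m)
    (he : (u, v) ∈ E (s + m)) : v ∈ reachSet A δ s j (m + 1) := by
  rw [mem_reachSet] at hu ⊢
  have hΦ := transitionMatrix_mem_colStochastic h.mem_colStochastic s (s + m)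
  have hA := h.mem_colStochastic (s + m)
  rw [← add_assoc, transitionMatrix_succ A (Nat.le_add_right s m), mul_apply, pow_succ']
  calc δ * δ ^ m ≤ A (s + m) v u * transitionMatrix A s (s + m) u j :=
        mul_le_mul (h.le_of_mem _ _ _ he) hu (pow_nonneg h.pos.le m)
          (nonneg_of_mem_colStochastic hA)
    _ ≤ ∑ k, A (s + m) v k * transitionMatrix A s (s + m) k j :=
        single_le_sum (f := fun k => A (s + m) v k * transitionMatrix A s (s + m) k j)
          (fun k _ => mul_nonneg (nonneg_of_mem_colStochastic hA)
            (nonneg_of_mem_colStochastic hΦ)) (mem_univ u)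

theorem reachSet_mono (h : IsMixingOn A E δ) : Monotone (reachSet A δ s j) :=
  monotone_nat_of_le_succ fun _ k hk => h.mem_reachSet_succ hk (h.self_mem _ k)

theorem reachSet_ssubset (h : IsMixingOn A E δ) (hconn : IsUniformlyStronglyConnected E B)
    (hS : reachSet A δ s j m ≠ univ) : reachSet A δ s j m ⊂ reachSet A δ s j (m + B) := by
  refine (ssubset_iff_of_subset (h.reachSet_mono (Nat.le_add_right m B))).2 ?_
  obtain ⟨k, hk⟩ : ∃ k, k ∉ reachSet A δ s j m := by
    by_contra! hall
    exact hS (eq_univ_of_forall hall)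
  by_contra! hclosed
  apply hk
  clear hk
  -- a path from `j` to `k` inside the window `[s + m, s + m + B)` cannot leave `reachSet … m`
  induction hconn (s + m) j k with
  | refl => exact h.reachSet_mono (Nat.zero_le m) self_mem_reachSet_zero
  | tail _ hedge ih =>
    obtain ⟨s', hs, hs', he⟩ := hedge
    obtain ⟨m', rfl⟩ : ∃ m', s' = s + m' := ⟨s' - s, by omega⟩
    exact hclosed _ (h.reachSet_mono (by omega)
      (h.mem_reachSet_succ (h.reachSet_mono (by omega) ih) he))

theorem min_le_card_reachSet (h : IsMixingOn A E δ) (hconn : IsUniformlyStronglyConnected E B)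
    (q : ℕ) : min (q + 1) (Fintype.card ι) ≤ #(reachSet A δ s j (q * B)) := by
  induction q with
  | zero =>
    rw [zero_add, zero_mul]
    exact (min_le_left _ _).trans (card_pos.2 ⟨j, self_mem_reachSet_zero⟩)
  | succ q ih =>
    rw [add_mul, one_mul]
    by_cases hS : reachSet A δ s j (q * B) = univ
    · have hS' : reachSet A δ s j (q * B + B) = univ :=
        eq_univ_of_forall fun k => h.reachSet_mono (Nat.le_add_right _ _) (hS ▸ mem_univ k)
      simp [hS']
    · have := card_lt_card (h.reachSet_ssubset hconn hS)
      have := (card_lt_iff_ne_univ _).2 hS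
      omega

theorem pow_le_transitionMatrix (h : IsMixingOn A E δ) (hconn : IsUniformlyStronglyConnected E B)
    (s : ℕ) (k j : ι) :
    δ ^ (Fintype.card ι * B) ≤ transitionMatrix A s (s + Fintype.card ι * B) k j := by
  have hcard := h.min_le_card_reachSet hconn (s := s) (j := j) (Fintype.card ι)
  rw [min_eq_right (Nat.le_succ _)] at hcard
  rw [← mem_reachSet, eq_univ_of_card _ (le_antisymm (card_le_univ _) hcard)]
  exact mem_univ k

theorem pow_le_transitionMatrix_self (h : IsMixingOn A E δ) (s m : ℕ) (j : ι) :
    δ ^ m ≤ transitionMatrix A s (s + m) j j :=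
  mem_reachSet.1 (h.reachSet_mono (Nat.zero_le m) self_mem_reachSet_zero)

theorem transitionMatrix_sub_le (h : IsMixingOn A E δ) (hconn : IsUniformlyStronglyConnected E B)
    {s t : ℕ} (hst : s ≤ t) (i j j' : ι) :
    transitionMatrix A s t i j - transitionMatrix A s t i j' ≤
      (1 - Fintype.card ι * δ ^ (Fintype.card ι * B)) ^ ((t - s) / (Fintype.card ι * B)) := by
  set K := Fintype.card ι * B
  suffices key : ∀ q r s (j j' : ι), transitionMatrix A s (s + (K * q + r)) i j
      - transitionMatrix A s (s + (K * q + r)) i j' ≤ (1 - Fintype.card ι * δ ^ K) ^ q by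
    have := key ((t - s) / K) ((t - s) % K) s j j'
    rwa [Nat.div_add_mod, Nat.add_sub_cancel' hst] at this
  intro q
  induction q with
  | zero =>
    intro r s j j'
    have hΦ := transitionMatrix_mem_colStochastic h.mem_colStochastic s (s + (K * 0 + r))
    have := le_one_of_mem_colStochastic hΦ (i := j) (j := i)
    have := nonneg_of_mem_colStochastic hΦ (i := i) (j := j')
    rw [pow_zero]
    linarith
  | succ q ih =>
    intro r s j j'
    rw [transitionMatrix_trans A (Nat.le_add_right s K) (by nlinarith), pow_succ',
      show s + (K * (q + 1) + r) = s + K + (K * q + r) by ring]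
    exact mul_apply_sub_le_of_mem_colStochastic
      (transitionMatrix_mem_colStochastic h.mem_colStochastic s (s + K))
      (h.pow_le_transitionMatrix hconn s) (ih r (s + K)) j j'

theorem pow_le_of_eq_mulVec (h : IsMixingOn A E δ) (hconn : IsUniformlyStronglyConnected E B)
    {y : ℕ → ι → ℝ} (hy0 : ∀ i, y 0 i = 1) (hy : ∀ t, y (t + 1) = A t *ᵥ y t) (t : ℕ) (j : ι) :
    δ ^ (Fintype.card ι * B) ≤ y t j := by
  set K := Fintype.card ι * B with hK
  have hΦ := transitionMatrix_mem_colStochastic h.mem_colStochastic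
  rcases lt_or_ge t K with ht | ht
  · have hδ1 : δ ≤ 1 := (h.le_of_mem 0 j j (h.self_mem 0 j)).trans
      (le_one_of_mem_colStochastic (h.mem_colStochastic 0))
    calc δ ^ K ≤ δ ^ t := pow_le_pow_of_le_one h.pos.le hδ1 ht.le
      _ ≤ transitionMatrix A 0 t j j := by simpa using h.pow_le_transitionMatrix_self 0 t j
      _ ≤ ∑ k, transitionMatrix A 0 t j k :=
          single_le_sum (f := transitionMatrix A 0 t j)
            (fun k _ => nonneg_of_mem_colStochastic (hΦ 0 t)) (mem_univ j)
      _ = y t j := by simp [eq_transitionMatrix_mulVec hy (Nat.zero_le t), mulVec, dotProduct, hy0]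
  · have hy_nonneg : ∀ k, 0 ≤ y (t - K) k := fun k => by
      rw [eq_transitionMatrix_mulVec hy (Nat.zero_le _)]
      exact nonneg_mulVec_of_mem_colStochastic (hΦ 0 _) (fun i => (hy0 i).symm ▸ zero_le_one) k
    have hsum := sum_eq_sum_of_eq_mulVec h.mem_colStochastic hy (t - K)
    simp only [hy0, sum_const, card_univ, nsmul_eq_mul, mul_one] at hsum
    have hcard : (1 : ℝ) ≤ Fintype.card ι := Nat.one_le_cast.2 (Fintype.card_pos_iff.2 ⟨j⟩)
    -- after `K` more steps every node holds at least `δ ^ K` of each node's mass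
    calc δ ^ K ≤ δ ^ K * ∑ k, y (t - K) k := by
          rw [hsum]
          exact le_mul_of_one_le_right (pow_nonneg h.pos.le K) hcard
      _ ≤ ∑ k, transitionMatrix A (t - K) t j k * y (t - K) k := by
          rw [mul_sum]
          gcongr with k
          · exact hy_nonneg k
          · have := h.pow_le_transitionMatrix hconn (t - K) j k
            rwa [← hK, Nat.sub_add_cancel ht] at this
      _ = y t j := by
          rw [eq_transitionMatrix_mulVec hy (Nat.sub_le t K)]
          rfl

end IsMixingOn

end Connectivity

section Summability

theorem summable_pow_div {c : ℝ} (hc0 : 0 ≤ c) (hc1 : c < 1) {K : ℕ} (hK : 0 < K) :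
    Summable fun m : ℕ => c ^ (m / K) := by
  have : NeZero K := ⟨hK.ne'⟩
  rw [← (Nat.divModEquiv K).symm.summable_iff]
  have hq : ∀ (q : ℕ) (r : Fin K), (q * K + r) / K = q := fun q r => by
    rw [Nat.add_comm, Nat.add_mul_div_right _ _ hK, Nat.div_eq_of_lt r.is_lt, zero_add]
  simpa [Function.comp_def, hq] using (summable_geometric_of_lt_one hc0 hc1).mul_of_nonneg
    (Summable.of_finite (f := fun _ : Fin K => (1 : ℝ))) (fun _ => pow_nonneg hc0 _)
    (fun _ => zero_le_one)

theorem summable_mul_sum_range_mul {b ρ v : ℕ → ℝ} (hb0 : ∀ t, 0 ≤ b t) (hb : Antitone b)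
    (hρ0 : ∀ m, 0 ≤ ρ m) (hρ : Summable ρ) (hv0 : ∀ s, 0 ≤ v s)
    (hv : Summable fun s => b s * v s) :
    Summable fun t => b t * ∑ s ∈ range (t + 1), ρ (t - s) * v s := by
  have hcauchy : Summable fun t => ∑ s ∈ range (t + 1), b s * v s * ρ (t - s) :=
    summable_sum_mul_range_of_summable_mul
      (hv.mul_of_nonneg hρ (fun s => mul_nonneg (hb0 s) (hv0 s)) hρ0)
  refine .of_nonneg_of_le
    (fun t => mul_nonneg (hb0 t) (sum_nonneg fun s _ => mul_nonneg (hρ0 _) (hv0 s)))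
    (fun t => ?_) hcauchy
  rw [mul_sum]
  refine sum_le_sum fun s hs => ?_
  calc b t * (ρ (t - s) * v s) ≤ b s * (ρ (t - s) * v s) :=
        mul_le_mul_of_nonneg_right (hb (mem_range_succ_iff.1 hs)) (mul_nonneg (hρ0 _) (hv0 s))
    _ = b s * v s * ρ (t - s) := by ring

end Summability

section Consensus

variable {ι : Type*} [Fintype ι] [DecidableEq ι] {A : ℕ → Matrix ι ι ℝ} {y u e : ℕ → ι → ℝ}

theorem abs_transitionMatrix_mulVec_sub_le (hA : ∀ t, A t ∈ colStochastic ℝ ι) {ρ : ℕ → ℝ}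
    (hρ : ∀ s t, s ≤ t → ∀ i j j',
      transitionMatrix A s t i j - transitionMatrix A s t i j' ≤ ρ (t - s))
    (hy0 : ∀ i, y 0 i = 1) (hy : ∀ t, y (t + 1) = A t *ᵥ y t) {r t : ℕ} (hrt : r ≤ t) (i : ι)
    (v : ι → ℝ) :
    |(transitionMatrix A r t *ᵥ v) i - y t i / Fintype.card ι * ∑ j, v j| ≤
      ρ (t - r) * ∑ j, |v j| := by
  have hN : (0 : ℝ) < Fintype.card ι := Nat.cast_pos.2 (Fintype.card_pos_iff.2 ⟨i⟩)
  -- `y t i / N` is row `i` of `Φ(r, t)` averaged against the convex weights `y r / N`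
  have hμ : y t i / Fintype.card ι
      = ∑ k, y r k / Fintype.card ι * transitionMatrix A r t i k := by
    simp only [eq_transitionMatrix_mulVec hy hrt, mulVec, dotProduct, sum_div]
    exact sum_congr rfl fun k _ => by ring
  refine abs_mulVec_sub_mul_sum_le (fun j => ?_) v
  rw [hμ]
  refine abs_sub_sum_mul_le (hρ r t hrt i) (fun k => div_nonneg ?_ hN.le) ?_ j
  · rw [eq_transitionMatrix_mulVec hy (Nat.zero_le r)]
    exact nonneg_mulVec_of_mem_colStochastic (transitionMatrix_mem_colStochastic hA 0 r)
      (fun k => (hy0 k).symm ▸ zero_le_one) k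
  · rw [← sum_div, sum_eq_sum_of_eq_mulVec hA hy]
    simp [hy0, hN.ne']

theorem abs_consensus_error_le (hA : ∀ t, A t ∈ colStochastic ℝ ι) {ρ : ℕ → ℝ}
    (hρ0 : ∀ m, 0 ≤ ρ m) (hρ : ∀ s t, s ≤ t → ∀ i j j',
      transitionMatrix A s t i j - transitionMatrix A s t i j' ≤ ρ (t - s))
    (hy0 : ∀ i, y 0 i = 1) (hy : ∀ t, y (t + 1) = A t *ᵥ y t)
    (hu : ∀ t, u (t + 1) = A t *ᵥ u t - e t) (t : ℕ) (i : ι) :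
    |(A t *ᵥ u t) i - y (t + 1) i / Fintype.card ι * ∑ j, u t j| ≤
      ρ (t + 1) * ∑ j, |u 0 j| + ∑ s ∈ range (t + 1), ρ (t - s) * ∑ j, |e s j| := by
  have key := fun r (hr : r ≤ t + 1) v => abs_transitionMatrix_mulVec_sub_le hA hρ hy0 hy hr i v
  set μ := y (t + 1) i / Fintype.card ι
  have hAu : A t *ᵥ u t = transitionMatrix A 0 (t + 1) *ᵥ u 0
      - ∑ s ∈ range t, transitionMatrix A (s + 1) (t + 1) *ᵥ e s := by
    have := eq_transitionMatrix_mulVec_sub_sum hu (t + 1)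
    rwa [hu, sum_range_succ, transitionMatrix_of_le A le_rfl, one_mulVec, ← sub_sub,
      sub_left_inj] at this
  have hsum : ∑ j, u t j = ∑ j, u 0 j - ∑ s ∈ range t, ∑ j, e s j := by
    rw [eq_transitionMatrix_mulVec_sub_sum hu t]
    simp only [Pi.sub_apply, Finset.sum_apply, sum_sub_distrib]
    rw [sum_mulVec_of_mem_colStochastic (transitionMatrix_mem_colStochastic hA 0 t), sum_comm]
    simp only [sum_mulVec_of_mem_colStochastic (transitionMatrix_mem_colStochastic hA _ t)]
  calc |(A t *ᵥ u t) i - μ * ∑ j, u t j|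
      = |((transitionMatrix A 0 (t + 1) *ᵥ u 0) i - μ * ∑ j, u 0 j)
          - ∑ s ∈ range t, ((transitionMatrix A (s + 1) (t + 1) *ᵥ e s) i - μ * ∑ j, e s j)| := by
        rw [hAu, hsum, Pi.sub_apply, Finset.sum_apply i (range t)]
        simp only [sum_sub_distrib, mul_sub, mul_sum]
        rw [sub_sub_sub_comm]
    _ ≤ |(transitionMatrix A 0 (t + 1) *ᵥ u 0) i - μ * ∑ j, u 0 j|
          + ∑ s ∈ range t, |(transitionMatrix A (s + 1) (t + 1) *ᵥ e s) i - μ * ∑ j, e s j| :=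
        (abs_sub _ _).trans (add_le_add_right (abs_sum_le_sum_abs _ _) _)
    _ ≤ ρ (t + 1) * ∑ j, |u 0 j| + ∑ s ∈ range t, ρ (t - s) * ∑ j, |e s j| := by
        refine add_le_add (key 0 (Nat.zero_le _) (u 0)) (sum_le_sum fun s hs => ?_)
        have := key (s + 1) (by linarith [mem_range.1 hs]) (e s)
        rwa [show t + 1 - (s + 1) = t - s by omega] at this
    _ ≤ ρ (t + 1) * ∑ j, |u 0 j| + ∑ s ∈ range (t + 1), ρ (t - s) * ∑ j, |e s j| := by
        rw [sum_range_succ]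
        linarith [mul_nonneg (hρ0 (t - t))
          (sum_nonneg fun j (_ : j ∈ univ) => abs_nonneg (e t j))]

variable {E : ℕ → Finset (ι × ι)} {δ : ℝ} {B : ℕ}

theorem IsMixingOn.summable_mul_abs_consensus_error (h : IsMixingOn A E δ)
    (hconn : IsUniformlyStronglyConnected E B) (hB : 0 < B) (hy0 : ∀ i, y 0 i = 1)
    (hy : ∀ t, y (t + 1) = A t *ᵥ y t) (hu : ∀ t, u (t + 1) = A t *ᵥ u t - e t) {b : ℕ → ℝ}
    (hb0 : ∀ t, 0 ≤ b t) (hb : Antitone b) (he : Summable fun t => b t * ∑ j, |e t j|) (i : ι) :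
    Summable fun t => b t * |(A t *ᵥ u t) i - y (t + 1) i / Fintype.card ι * ∑ j, u t j| := by
  set K := Fintype.card ι * B
  set c := 1 - Fintype.card ι * δ ^ K
  have hcard : 0 < Fintype.card ι := Fintype.card_pos_iff.2 ⟨i⟩
  have hc0 : 0 ≤ c := by
    have hle := sum_le_sum fun k (_ : k ∈ univ) => h.pow_le_transitionMatrix hconn 0 k i
    rw [sum_col_of_mem_colStochastic
      (transitionMatrix_mem_colStochastic h.mem_colStochastic 0 _)] at hle
    simp only [sum_const, card_univ, nsmul_eq_mul] at hle
    linarith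
  have hc1 : c < 1 := by
    have : 0 < (Fintype.card ι : ℝ) * δ ^ K := by have := h.pos; positivity
    linarith
  have hρ : Summable fun m : ℕ => c ^ (m / K) := summable_pow_div hc0 hc1 (Nat.mul_pos hcard hB)
  have hU0 : 0 ≤ ∑ j, |u 0 j| := sum_nonneg fun j _ => abs_nonneg _
  have hbound := abs_consensus_error_le h.mem_colStochastic (ρ := fun m => c ^ (m / K))
    (fun m => pow_nonneg hc0 _) (fun s t hst => h.transitionMatrix_sub_le hconn hst) hy0 hy hu
  have hfirst : Summable fun t => b t * (c ^ ((t + 1) / K) * ∑ j, |u 0 j|) := by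
    refine .of_nonneg_of_le (fun t => mul_nonneg (hb0 t) (mul_nonneg (pow_nonneg hc0 _) hU0))
      (fun t => ?_) (((summable_nat_add_iff 1).2 hρ).mul_left (b 0 * ∑ j, |u 0 j|))
    calc b t * (c ^ ((t + 1) / K) * ∑ j, |u 0 j|)
        ≤ b 0 * (c ^ ((t + 1) / K) * ∑ j, |u 0 j|) :=
          mul_le_mul_of_nonneg_right (hb (Nat.zero_le t)) (mul_nonneg (pow_nonneg hc0 _) hU0)
      _ = b 0 * (∑ j, |u 0 j|) * c ^ ((t + 1) / K) := by rw [mul_comm (c ^ _), mul_assoc]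
  have hrest := summable_mul_sum_range_mul hb0 hb (fun m => pow_nonneg hc0 (m / K)) hρ
      (fun s => sum_nonneg fun j _ => abs_nonneg (e s j)) he
  refine .of_nonneg_of_le (fun t => mul_nonneg (hb0 t) (abs_nonneg _))
    (fun t => (mul_le_mul_of_nonneg_left (hbound t i) (hb0 t)).trans_eq (mul_add _ _ _))
    (hfirst.add hrest)

end Consensus

theorem EuclideanSpace.norm_le_sum_abs {κ : Type*} [Fintype κ] (v : EuclideanSpace ℝ κ) :
    ‖v‖ ≤ ∑ l, |v l| := by
  rw [EuclideanSpace.norm_eq, Real.sqrt_le_left (sum_nonneg fun l _ => abs_nonneg _)]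
  simpa only [Real.norm_eq_abs] using
    sum_sq_le_sq_sum_of_nonneg (s := univ) (fun l _ => abs_nonneg (v l))

section PushSum

variable {ι : Type*} [Fintype ι] [DecidableEq ι]

noncomputable def pushSumMatrix (E : ℕ → Finset (ι × ι)) (deg : ℕ → ι → ℕ) (t : ℕ) :
    Matrix ι ι ℝ :=
  Matrix.of fun i j => if (j, i) ∈ E t then (deg t j : ℝ)⁻¹ else 0

variable {E : ℕ → Finset (ι × ι)} {deg : ℕ → ι → ℕ}

theorem sum_filter_inv_deg_smul {M : Type*} [AddCommMonoid M] [Module ℝ M] (v : ι → M)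
    (t : ℕ) (i : ι) : ∑ j ∈ univ.filter (fun j => (j, i) ∈ E t), (deg t j : ℝ)⁻¹ • v j
      = ∑ j, pushSumMatrix E deg t i j • v j := by
  rw [sum_filter]
  exact sum_congr rfl fun j _ => by split_ifs <;> simp [pushSumMatrix, *]

theorem isMixingOn_pushSumMatrix [Nonempty ι] (hself : ∀ t i, (i, i) ∈ E t)
    (hdeg : ∀ t j, deg t j = #(univ.filter fun k => (j, k) ∈ E t)) :
    IsMixingOn (pushSumMatrix E deg) E (Fintype.card ι : ℝ)⁻¹ where
  pos := by simp [Fintype.card_pos]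
  mem_colStochastic t := by
    refine mem_colStochastic_iff_sum.2 ⟨fun i j => ?_, fun j => ?_⟩
    · simp only [pushSumMatrix, of_apply]
      split_ifs <;> positivity
    · have hdeg0 : (deg t j : ℝ) ≠ 0 := by
        rw [hdeg, Nat.cast_ne_zero, ← pos_iff_ne_zero, card_pos]
        exact ⟨j, mem_filter.2 ⟨mem_univ j, hself t j⟩⟩
      simp only [pushSumMatrix, of_apply]
      rw [← sum_filter, sum_const, ← hdeg, nsmul_eq_mul, mul_inv_cancel₀ hdeg0]
  self_mem := hself
  le_of_mem t i j hji := by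
    have hpos : 0 < deg t j := by
      rw [hdeg, card_pos]
      exact ⟨i, mem_filter.2 ⟨mem_univ i, hji⟩⟩
    simp only [pushSumMatrix, of_apply, if_pos hji]
    exact inv_anti₀ (Nat.cast_pos.2 hpos)
      (Nat.cast_le.2 ((hdeg t j).trans_le (card_le_univ _)))

theorem IsMixingOn.summable_mul_norm_pushSum_error {κ : Type*} [Fintype κ]
    {A : ℕ → Matrix ι ι ℝ} {δ : ℝ} {B : ℕ} (h : IsMixingOn A E δ)
    (hconn : IsUniformlyStronglyConnected E B) (hB : 0 < B)
    {x w z e : ℕ → ι → EuclideanSpace ℝ κ} {y : ℕ → ι → ℝ} (hy0 : ∀ i, y 0 i = 1)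
    (hy : ∀ t, y (t + 1) = A t *ᵥ y t) (hw : ∀ t i, w (t + 1) i = ∑ j, A t i j • x t j)
    (hz : ∀ t i, z (t + 1) i = (y (t + 1) i)⁻¹ • w (t + 1) i)
    (hx : ∀ t i, x (t + 1) i = w (t + 1) i - e t i) {b : ℕ → ℝ} (hb0 : ∀ t, 0 ≤ b t)
    (hb : Antitone b) (he : Summable fun t => b t * ∑ j, ∑ l, |e t j l|) (i : ι) :
    Summable fun t => b t * ‖z (t + 1) i - (Fintype.card ι : ℝ)⁻¹ • ∑ j, x t j‖ := by
  set N : ℝ := (Fintype.card ι : ℝ)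
  set D : ℕ → κ → ℝ := fun t l =>
    (A t *ᵥ fun j => x t j l) i - y (t + 1) i / N * ∑ j, x t j l
  have hw' : ∀ t k l, w (t + 1) k l = (A t *ᵥ fun j => x t j l) k := fun t k l => by
    simp [hw, mulVec, dotProduct]
  have hD : ∀ l, Summable fun t => b t * |D t l| := fun l => by
    refine h.summable_mul_abs_consensus_error hconn hB hy0 hy (e := fun t j => e t j l)
      (fun t => funext fun j => by simp [hx, hw']) hb0 hb (.of_nonneg_of_le
        (fun t => mul_nonneg (hb0 t) (sum_nonneg fun j _ => abs_nonneg _)) (fun t => ?_) he) i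
    exact mul_le_mul_of_nonneg_left (sum_le_sum fun j _ =>
      single_le_sum (f := fun l => |e t j l|) (fun l _ => abs_nonneg _) (mem_univ l)) (hb0 t)
  have hy_lb := h.pow_le_of_eq_mulVec hconn hy0 hy
  have hδ : 0 < δ ^ (Fintype.card ι * B) := pow_pos h.pos _
  -- `z = w / y`, so each coordinate of the error is a consensus error divided by `y ≥ δ ^ (N B)`
  have hcoord : ∀ t l, |(z (t + 1) i - N⁻¹ • ∑ j, x t j) l|
      ≤ (δ ^ (Fintype.card ι * B))⁻¹ * |D t l| := fun t l => by
    have hy_pos := hδ.trans_le (hy_lb (t + 1) i)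
    have : (z (t + 1) i - N⁻¹ • ∑ j, x t j) l = (y (t + 1) i)⁻¹ * D t l := by
      simp only [D, PiLp.sub_apply, PiLp.smul_apply, smul_eq_mul, hz, hw', WithLp.ofLp_sum,
        Finset.sum_apply]
      field_simp
    rw [this, abs_mul, abs_inv, abs_of_pos hy_pos]
    exact mul_le_mul_of_nonneg_right (inv_anti₀ hδ (hy_lb (t + 1) i)) (abs_nonneg _)
  refine .of_nonneg_of_le (fun t => mul_nonneg (hb0 t) (norm_nonneg _)) (fun t => ?_)
    ((summable_sum (s := univ) fun l _ => hD l).mul_left (δ ^ (Fintype.card ι * B))⁻¹)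
  calc b t * ‖z (t + 1) i - N⁻¹ • ∑ j, x t j‖
      ≤ b t * ∑ l, (δ ^ (Fintype.card ι * B))⁻¹ * |D t l| :=
        mul_le_mul_of_nonneg_left ((EuclideanSpace.norm_le_sum_abs _).trans
          (sum_le_sum fun l _ => hcoord t l)) (hb0 t)
    _ = (δ ^ (Fintype.card ι * B))⁻¹ * ∑ l, b t * |D t l| := by
        rw [← mul_sum, ← mul_sum]
        ring

end PushSum

theorem pushsum_weighted_consensus_summable_general
    (n d B : ℕ) (hB : 1 ≤ B)
    (E : ℕ → Finset (Fin n × Fin n))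
    (hself : ∀ t i, (i, i) ∈ E t)
    -- B-strong connectivity
    (hconn : ∀ t : ℕ, ∀ i j : Fin n,
      Relation.ReflTransGen (fun u v => ∃ s, t ≤ s ∧ s < t + B ∧ (u, v) ∈ E s) i j)
    (f ψ : Fin n → EuclideanSpace ℝ (Fin d) → EuclideanSpace ℝ (Fin d))
    -- Assumption 3: step sizes and penalty parameters
    (a r : ℕ → ℝ)
    -- the penalty-based push-sum algorithm
    (deg : ℕ → Fin n → ℕ)
    (hdeg : ∀ t j, deg t j = (Finset.univ.filter (fun k => (j, k) ∈ E t)).card)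
    (x w z : ℕ → Fin n → EuclideanSpace ℝ (Fin d)) (y : ℕ → Fin n → ℝ)
    (hy0 : ∀ i, y 0 i = 1)
    (hw : ∀ t i, w (t + 1) i
      = ∑ j ∈ Finset.univ.filter (fun j => (j, i) ∈ E t), ((deg t j : ℝ))⁻¹ • x t j)
    (hy : ∀ t i, y (t + 1) i
      = ∑ j ∈ Finset.univ.filter (fun j => (j, i) ∈ E t), ((deg t j : ℝ))⁻¹ * y t j)
    (hz : ∀ t i, z (t + 1) i = (y (t + 1) i)⁻¹ • w (t + 1) i)
    (hx : ∀ t i, x (t + 1) i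
      = w (t + 1) i - a t • (f i (z (t + 1) i) + r t • ψ i (z (t + 1) i)))
    (xbar : ℕ → EuclideanSpace ℝ (Fin d))
    (hxbar : ∀ t, xbar t = (n : ℝ)⁻¹ • ∑ i, x t i)
    -- the weight sequence b
    (b : ℕ → ℝ) (hbpos : ∀ t, 0 < b t) (hbmono : ∀ s t, s ≤ t → b t ≤ b s)
    (hbsum : ∀ i, Summable (fun t =>
      b t * a t * ∑ k, |(f i (z (t + 1) i) + r t • ψ i (z (t + 1) i)) k|)) :
    ∀ i, Summable (fun t => b t * ‖z (t + 1) i - xbar t‖) := by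
  intro i
  have : Nonempty (Fin n) := ⟨i⟩
  have he : Summable fun t => b t * ∑ j, ∑ l,
      |(a t • (f j (z (t + 1) j) + r t • ψ j (z (t + 1) j))) l| := by
    refine (summable_sum (s := univ) fun j _ => (hbsum j).abs).congr fun t => ?_
    simp only [PiLp.smul_apply, smul_eq_mul, abs_mul, ← mul_sum, abs_of_pos (hbpos t),
      abs_sum_of_nonneg' fun _ => abs_nonneg _, mul_assoc]
  have hpush := (isMixingOn_pushSumMatrix hself hdeg).summable_mul_norm_pushSum_error hconn hB hy0
    (fun t => funext fun i => by
      simpa [hy, mulVec, dotProduct] using sum_filter_inv_deg_smul (y t) t i)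
    (fun t i => by rw [hw, sum_filter_inv_deg_smul]) hz hx (fun t => (hbpos t).le) hbmono he i
  simpa [hxbar] using hpush

/-- Weighted summability of consensus errors: under `B`-strong connectivity and
Assumptions 1 and 3, if `{b_t}` is a nonincreasing positive sequence with
`Σ_t b_t a_t ‖f_i(z_i(t+1)) + r_t ψ_i(z_i(t+1))‖₁ < ∞` for every `i`, then
`Σ_t b_t ‖z_i(t+1) − x̄(t)‖ < ∞` for every `i`. -/
theorem pushsum_weighted_consensus_summable
    (n d B : ℕ) (hn : 1 ≤ n) (hd : 1 ≤ d) (hB : 1 ≤ B)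
    (E : ℕ → Finset (Fin n × Fin n))
    (hself : ∀ t i, (i, i) ∈ E t)
    -- B-strong connectivity
    (hconn : ∀ t : ℕ, ∀ i j : Fin n,
      Relation.ReflTransGen (fun u v => ∃ s, t ≤ s ∧ s < t + B ∧ (u, v) ∈ E s) i j)
    (F c : Fin n → EuclideanSpace ℝ (Fin d) → ℝ)
    (hFdiff : ∀ i, Differentiable ℝ (F i)) (hFconv : ∀ i, ConvexOn ℝ Set.univ (F i))
    (hcdiff : ∀ i, Differentiable ℝ (c i)) (hcconv : ∀ i, ConvexOn ℝ Set.univ (c i))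
    (f ψ : Fin n → EuclideanSpace ℝ (Fin d) → EuclideanSpace ℝ (Fin d))
    (hf : ∀ i, f i = gradient (F i))
    (hψ : ∀ i, ψ i = gradient (fun zz => penaltyKernel (c i zz)))
    -- Assumption 1: uniformly bounded gradients
    (L K : ℝ) (hL : ∀ i zz, ‖f i zz‖ ≤ L) (hK : ∀ i zz, ‖gradient (c i) zz‖ ≤ K)
    -- Assumption 3: step sizes and penalty parameters
    (a r : ℕ → ℝ) (ha0 : ∀ t, 0 ≤ a t) (hamono : ∀ s t, s ≤ t → a t ≤ a s)
    (hadiv : ¬ Summable a)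
    (hr1 : ∀ t, 1 ≤ r t) (hrinf : Filter.Tendsto r Filter.atTop Filter.atTop)
    (har : Summable (fun t => a t ^ 2 * r t ^ 3))
    (hro : Filter.Tendsto (fun t => (r (t + 1) - r t) / a t) Filter.atTop (nhds 0))
    -- the penalty-based push-sum algorithm
    (deg : ℕ → Fin n → ℕ)
    (hdeg : ∀ t j, deg t j = (Finset.univ.filter (fun k => (j, k) ∈ E t)).card)
    (x w z : ℕ → Fin n → EuclideanSpace ℝ (Fin d)) (y : ℕ → Fin n → ℝ)
    (hy0 : ∀ i, y 0 i = 1)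
    (hw : ∀ t i, w (t + 1) i
      = ∑ j ∈ Finset.univ.filter (fun j => (j, i) ∈ E t), ((deg t j : ℝ))⁻¹ • x t j)
    (hy : ∀ t i, y (t + 1) i
      = ∑ j ∈ Finset.univ.filter (fun j => (j, i) ∈ E t), ((deg t j : ℝ))⁻¹ * y t j)
    (hz : ∀ t i, z (t + 1) i = (y (t + 1) i)⁻¹ • w (t + 1) i)
    (hx : ∀ t i, x (t + 1) i
      = w (t + 1) i - a t • (f i (z (t + 1) i) + r t • ψ i (z (t + 1) i)))
    (xbar : ℕ → EuclideanSpace ℝ (Fin d))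
    (hxbar : ∀ t, xbar t = (n : ℝ)⁻¹ • ∑ i, x t i)
    -- the weight sequence b
    (b : ℕ → ℝ) (hbpos : ∀ t, 0 < b t) (hbmono : ∀ s t, s ≤ t → b t ≤ b s)
    (hbsum : ∀ i, Summable (fun t =>
      b t * a t * ∑ k, |(f i (z (t + 1) i) + r t • ψ i (z (t + 1) i)) k|)) :
    ∀ i, Summable (fun t => b t * ‖z (t + 1) i - xbar t‖) :=
  pushsum_weighted_consensus_summable_general n d B hB E hself hconn f ψ a r deg hdeg x w z y hy0 hw
    hy hz hx xbar hxbar b hbpos hbmono hbsum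
end

section
/- Let {z_n}, {β_n}, {ζ_n}, {ξ_n} be sequences of nonnegative real numbers such that z_{n+1} ≤ z_n (1 + β_n) − ζ_n + ξ_n for all n, and suppose Σ_{n=1}^∞ β_n < ∞ and Σ_{n=1}^∞ ξ_n < ∞. Then lim_{n→∞} z_n exists and is finite, and Σ_{n=1}^∞ ζ_n < ∞. -/
/-- Deterministic Robbins–Siegmund lemma: if nonnegative sequences satisfy
`z (n+1) ≤ z n * (1 + β n) - ζ n + ξ n` with `Σ β < ∞` and `Σ ξ < ∞`, then
`z n` converges to a finite limit and `Σ ζ < ∞`. -/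
theorem robbins_siegmund_deterministic
    (z β ζ ξ : ℕ → ℝ)
    (hz : ∀ n, 0 ≤ z n) (hβ : ∀ n, 0 ≤ β n) (hζ : ∀ n, 0 ≤ ζ n) (hξ : ∀ n, 0 ≤ ξ n)
    (hrec : ∀ n, z (n + 1) ≤ z n * (1 + β n) - ζ n + ξ n)
    (hβs : Summable β) (hξs : Summable ξ) :
    (∃ c : ℝ, Filter.Tendsto z Filter.atTop (nhds c)) ∧ Summable ζ := by
  set P : ℕ → ℝ := fun n => ∏ k ∈ Finset.range n, (1 + β k) with hPdef
  have hP1 : ∀ n, 1 ≤ P n := by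
    intro n
    simp only [hPdef]
    calc (1:ℝ) = ∏ k ∈ Finset.range n, 1 := by simp
      _ ≤ ∏ k ∈ Finset.range n, (1 + β k) :=
        Finset.prod_le_prod (fun k _ => zero_le_one) (fun k _ => by linarith [hβ k])
  have hPpos : ∀ n, 0 < P n := fun n => lt_of_lt_of_le one_pos (hP1 n)
  have hPsucc : ∀ n, P (n + 1) = P n * (1 + β n) := fun n => Finset.prod_range_succ _ n
  set M : ℝ := Real.exp (∑' n, β n) with hMdef
  have hPM : ∀ n, P n ≤ M := by
    intro n
    calc P n ≤ ∏ k ∈ Finset.range n, Real.exp (β k) :=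
          Finset.prod_le_prod (fun k _ => by linarith [hβ k])
            (fun k _ => by linarith [Real.add_one_le_exp (β k)])
      _ = Real.exp (∑ k ∈ Finset.range n, β k) := (Real.exp_sum _ _).symm
      _ ≤ M := Real.exp_le_exp.mpr (Summable.sum_le_tsum _ (fun i _ => hβ i) hβs)
  set u : ℕ → ℝ := fun n => z n / P n with hudef
  have hu0 : ∀ n, 0 ≤ u n := fun n => div_nonneg (hz n) (hPpos n).le
  have key : ∀ n, u (n + 1) + ζ n / P (n + 1) ≤ u n + ξ n / P (n + 1) := by
    intro n
    have h1 : u (n + 1) ≤ (z n * (1 + β n) - ζ n + ξ n) / P (n + 1) :=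
      (div_le_div_iff_of_pos_right (hPpos (n + 1))).mpr (hrec n)
    have hne : P n ≠ 0 := (hPpos n).ne'
    have hbne : (1 : ℝ) + β n ≠ 0 := by linarith [hβ n]
    have h2 : (z n * (1 + β n) - ζ n + ξ n) / P (n + 1)
        = u n - ζ n / P (n + 1) + ξ n / P (n + 1) := by
      simp only [hudef, hPsucc]
      field_simp
    linarith [h1, h2.le, h2.ge]
  set S : ℝ := ∑' n, ξ n with hSdef
  set s : ℕ → ℝ := fun n => ∑ k ∈ Finset.range n, ξ k / P (k + 1) with hsdef
  have hsS : ∀ n, s n ≤ S := by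
    intro n
    calc s n ≤ ∑ k ∈ Finset.range n, ξ k :=
          Finset.sum_le_sum (fun k _ => div_le_self (hξ k) (hP1 _))
      _ ≤ S := Summable.sum_le_tsum _ (fun i _ => hξ i) hξs
  have hsmono : Monotone s := monotone_nat_of_le_succ (fun n => by
    simp only [hsdef, Finset.sum_range_succ]
    have : 0 ≤ ξ n / P (n + 1) := div_nonneg (hξ n) (hPpos _).le
    linarith)
  set v : ℕ → ℝ := fun n => u n - s n with hvdef
  have hvanti : Antitone v := antitone_nat_of_succ_le (fun n => by
    have hk := key n
    have hzz : 0 ≤ ζ n / P (n + 1) := div_nonneg (hζ n) (hPpos _).le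
    simp only [hvdef, hsdef, Finset.sum_range_succ]
    linarith)
  have hvbdd : ∀ n, -S ≤ v n := fun n => by
    have := hsS n; have := hu0 n; simp only [hvdef]; linarith
  have hvconv : Filter.Tendsto v Filter.atTop (nhds (⨅ n, v n)) :=
    tendsto_atTop_ciInf hvanti ⟨-S, fun x ⟨n, hn⟩ => hn ▸ hvbdd n⟩
  have hsconv : Filter.Tendsto s Filter.atTop (nhds (⨆ n, s n)) :=
    tendsto_atTop_ciSup hsmono ⟨S, fun x ⟨n, hn⟩ => hn ▸ hsS n⟩
  have huconv : Filter.Tendsto u Filter.atTop (nhds ((⨅ n, v n) + (⨆ n, s n))) := by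
    have := hvconv.add hsconv
    refine this.congr (fun n => by simp [hvdef])
  have hPmono : Monotone P := monotone_nat_of_le_succ (fun n => by
    rw [hPsucc]
    nlinarith [hPpos n, hβ n])
  have hPconv : Filter.Tendsto P Filter.atTop (nhds (⨆ n, P n)) :=
    tendsto_atTop_ciSup hPmono ⟨M, fun x ⟨n, hn⟩ => hn ▸ hPM n⟩
  constructor
  · refine ⟨((⨅ n, v n) + (⨆ n, s n)) * (⨆ n, P n), ?_⟩
    have := huconv.mul hPconv
    refine this.congr (fun n => ?_)
    simp only [hudef]
    exact div_mul_cancel₀ _ (hPpos n).ne'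
  · set g : ℕ → ℝ := fun n => ζ n / P (n + 1) with hgdef
    have hg0 : ∀ n, 0 ≤ g n := fun n => div_nonneg (hζ n) (hPpos _).le
    have hgsum : Summable g := by
      apply summable_of_sum_range_le hg0 (c := u 0 + S)
      intro n
      have htel : ∑ k ∈ Finset.range n, (u k - u (k + 1)) = u 0 - u n :=
        Finset.sum_range_sub' u n
      have hle : ∑ k ∈ Finset.range n, g k
          ≤ ∑ k ∈ Finset.range n, ((u k - u (k + 1)) + ξ k / P (k + 1)) :=
        Finset.sum_le_sum (fun k _ => by have := key k; simp only [hgdef]; linarith)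
      rw [Finset.sum_add_distrib, htel] at hle
      have := hsS n
      have := hu0 n
      linarith [hsS n, hu0 n, hle]
    have hζle : ∀ n, ζ n ≤ M * g n := by
      intro n
      have : ζ n = g n * P (n + 1) := by
        simp only [hgdef]; exact (div_mul_cancel₀ _ (hPpos (n + 1)).ne').symm
      rw [this, mul_comm M]
      exact mul_le_mul_of_nonneg_left (hPM (n + 1)) (hg0 n)
    exact Summable.of_nonneg_of_le hζ hζle (hgsum.mul_left M)
end

section
/- Let N_g, N_d ≥ 1. For each i ∈ [N_g], let C_i : ℝ → ℝ be differentiable and convex with C_i'(p) > 0 for all p, let l_i ≥ 0, and let p_i^m ≤ P_i^M be real bounds; for each j ∈ [N_d], let U_j : ℝ → ℝ be differentiable and concave with U_j'(p) > 0 for all p, and let p_j^m ≤ P_j^M be real bounds. Consider the relaxed convex problem: minimize Σ_{i∈[N_g]} C_i(p_i) − Σ_{j∈[N_d]} U_j(p_j) over (p, v) ∈ ℝ^{N_g + N_d} × ℝ^{N_g} subject to Σ_{i∈[N_g]} (p_i − v_i) = Σ_{j∈[N_d]} p_j, p_i^m ≤ p_i ≤ P_i^M for i ∈ [N_g], p_j^m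 ≤ p_j ≤ P_j^M for j ∈ [N_d], and v_i ≥ l_i p_i² for i ∈ [N_g]. Assume: (Assumption 4) Σ_{j∈[N_d]} P_j^M ≥ Σ_{i∈[N_g]} (p_i^m − l_i (p_i^m)²); and (Assumption 5, Slater) there exists a point (p̂, v̂) with Σ_i (p̂_i − v̂_i) = Σ_j p̂_j, p_i^m < p̂_i < P_i^M, p_j^m < p̂_j < P_j^M, and v̂_i > l_i p̂_i² for all i, j. Then any minimizer (p*, v*) of the relaxed problem satisfies v_i* = l_i (p_i*)² for all i ∈ [N_g]; consequently p* is a solution of the original problem: minimize Σ_i C_i(p_i) − Σ_j U_j(p_j) subject to Σ_{i∈[N_g]} (p_i − l_i p_i²) = Σ_{j∈[N_d]} p_j and the same box constraints on p. -/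
/-- Energy management: under Assumption 4 (capacity bound) and Assumption 5 (Slater),
any minimizer `(p*, v*)` of the relaxed convex problem (with `v_i ≥ l_i p_i²`) satisfies
`v_i* = l_i (p_i*)²` for all generators, and hence `p*` solves the original non-convex
problem with the power-balance constraint `Σ_i (p_i − l_i p_i²) = Σ_j p_j`. -/
theorem relaxed_energy_management_solves_original
    (Ng Nd : ℕ) (hNg : 1 ≤ Ng) (hNd : 1 ≤ Nd)
    (C : Fin Ng → ℝ → ℝ) (U : Fin Nd → ℝ → ℝ)
    (l : Fin Ng → ℝ) (pgm pgM : Fin Ng → ℝ) (pdm pdM : Fin Nd → ℝ)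
    (hC : ∀ i, Differentiable ℝ (C i)) (hCconv : ∀ i, ConvexOn ℝ Set.univ (C i))
    (hC' : ∀ i p, 0 < deriv (C i) p)
    (hU : ∀ j, Differentiable ℝ (U j)) (hUconc : ∀ j, ConcaveOn ℝ Set.univ (U j))
    (hU' : ∀ j p, 0 < deriv (U j) p)
    (hl : ∀ i, 0 ≤ l i)
    (hgb : ∀ i, pgm i ≤ pgM i) (hdb : ∀ j, pdm j ≤ pdM j)
    -- Assumption 4
    (hA4 : (∑ i : Fin Ng, (pgm i - l i * (pgm i) ^ 2)) ≤ ∑ j : Fin Nd, pdM j)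
    -- Assumption 5 (Slater)
    (hA5 : ∃ (pg : Fin Ng → ℝ) (pd : Fin Nd → ℝ) (v : Fin Ng → ℝ),
      (∑ i, (pg i - v i)) = ∑ j, pd j ∧
      (∀ i, pgm i < pg i ∧ pg i < pgM i) ∧
      (∀ j, pdm j < pd j ∧ pd j < pdM j) ∧
      (∀ i, l i * (pg i) ^ 2 < v i))
    -- a minimizer of the relaxed convex problem
    (pg' : Fin Ng → ℝ) (pd' : Fin Nd → ℝ) (v' : Fin Ng → ℝ)
    (hfeas : (∑ i, (pg' i - v' i)) = ∑ j, pd' j ∧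
      (∀ i, pgm i ≤ pg' i ∧ pg' i ≤ pgM i) ∧
      (∀ j, pdm j ≤ pd' j ∧ pd' j ≤ pdM j) ∧
      (∀ i, l i * (pg' i) ^ 2 ≤ v' i))
    (hmin : ∀ (pg : Fin Ng → ℝ) (pd : Fin Nd → ℝ) (v : Fin Ng → ℝ),
      ((∑ i, (pg i - v i)) = ∑ j, pd j ∧
        (∀ i, pgm i ≤ pg i ∧ pg i ≤ pgM i) ∧
        (∀ j, pdm j ≤ pd j ∧ pd j ≤ pdM j) ∧
        (∀ i, l i * (pg i) ^ 2 ≤ v i)) →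
      (∑ i, C i (pg' i)) - (∑ j, U j (pd' j)) ≤ (∑ i, C i (pg i)) - (∑ j, U j (pd j))) :
    -- the relaxed inequality constraints are tight at the optimum
    (∀ i, v' i = l i * (pg' i) ^ 2) ∧
    -- p* is feasible for the original problem
    ((∑ i, (pg' i - l i * (pg' i) ^ 2)) = ∑ j, pd' j) ∧
    -- and p* solves the original problem
    (∀ (pg : Fin Ng → ℝ) (pd : Fin Nd → ℝ),
      ((∑ i, (pg i - l i * (pg i) ^ 2)) = ∑ j, pd j ∧
        (∀ i, pgm i ≤ pg i ∧ pg i ≤ pgM i) ∧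
        (∀ j, pdm j ≤ pd j ∧ pd j ≤ pdM j)) →
      (∑ i, C i (pg' i)) - (∑ j, U j (pd' j)) ≤ (∑ i, C i (pg i)) - (∑ j, U j (pd j))) := by
  have hCmono : ∀ i, StrictMono (C i) := fun i => strictMono_of_deriv_pos (hC' i)
  have hUmono : ∀ j, StrictMono (U j) := fun j => strictMono_of_deriv_pos (hU' j)
  obtain ⟨hbal, hgbox, hdbox, hvge⟩ := hfeas
  -- Claim A : tightness
  have tight : ∀ i, v' i = l i * (pg' i) ^ 2 := by
    by_contra hne
    push_neg at hne
    obtain ⟨i0, hi0⟩ := hne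
    have hδ : 0 < v' i0 - l i0 * (pg' i0) ^ 2 :=
      lt_of_le_of_ne (by linarith [hvge i0]) (by intro h; exact hi0 (by linarith))
    set δ := v' i0 - l i0 * (pg' i0) ^ 2 with hδdef
    by_cases hcase : ∃ j, pd' j < pdM j
    · -- Case 1: some demand can be increased
      obtain ⟨j0, hj0⟩ := hcase
      set ε := min δ (pdM j0 - pd' j0) with hε
      have hεpos : 0 < ε := lt_min hδ (by linarith)
      have hεδ : ε ≤ δ := min_le_left _ _
      have hεj : ε ≤ pdM j0 - pd' j0 := min_le_right _ _
      set pd2 : Fin Nd → ℝ := fun j => pd' j + (if j = j0 then ε else 0) with hpd2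
      set v2 : Fin Ng → ℝ := fun i => v' i - (if i = i0 then ε else 0) with hv2
      have hsum1 : (∑ i, (if i = i0 then ε else 0)) = ε := by
        simp [Finset.sum_ite_eq']
      have hsum2 : (∑ j, (if j = j0 then ε else 0)) = ε := by
        simp [Finset.sum_ite_eq']
      have hfeas2 : ((∑ i, (pg' i - v2 i)) = ∑ j, pd2 j ∧
          (∀ i, pgm i ≤ pg' i ∧ pg' i ≤ pgM i) ∧
          (∀ j, pdm j ≤ pd2 j ∧ pd2 j ≤ pdM j) ∧
          (∀ i, l i * (pg' i) ^ 2 ≤ v2 i)) := by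
        refine ⟨?_, hgbox, ?_, ?_⟩
        · have h1 : (∑ i, (pg' i - v2 i)) = (∑ i, (pg' i - v' i)) + ∑ i, (if i = i0 then ε else 0) := by
            rw [← Finset.sum_add_distrib]; apply Finset.sum_congr rfl; intro i _
            simp only [hv2]; ring
          have h2 : (∑ j, pd2 j) = (∑ j, pd' j) + ∑ j, (if j = j0 then ε else 0) := by
            rw [← Finset.sum_add_distrib]
          rw [h1, h2, hsum1, hsum2, hbal]
        · intro j
          by_cases hj : j = j0
          · have hp : pd2 j = pd' j0 + ε := by simp only [hpd2]; rw [if_pos hj, hj]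
            rw [hp, hj]
            exact ⟨by linarith [(hdbox j0).1], by linarith⟩
          · have hp : pd2 j = pd' j := by simp only [hpd2]; rw [if_neg hj]; ring
            rw [hp]; exact hdbox j
        · intro i
          by_cases hi : i = i0
          · have hv : v2 i = v' i - ε := by simp only [hv2]; rw [if_pos hi]
            have hδ1 : v' i = l i * (pg' i) ^ 2 + δ := by rw [hi, hδdef]; ring
            rw [hv, hδ1]; linarith
          · have hv : v2 i = v' i := by simp only [hv2]; rw [if_neg hi]; ring
            rw [hv]; exact hvge i
      have hdiff : (∑ j, (U j (pd2 j) - U j (pd' j))) = U j0 (pd2 j0) - U j0 (pd' j0) := by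
        rw [Finset.sum_eq_single j0]
        · intro b _ hb
          have : pd2 b = pd' b := by simp only [hpd2]; rw [if_neg hb]; ring
          rw [this, sub_self]
        · intro h; exact absurd (Finset.mem_univ j0) h
      have hp1 : pd2 j0 = pd' j0 + ε := by simp [hpd2]
      have hlt1 : U j0 (pd' j0) < U j0 (pd2 j0) := by
        rw [hp1]; exact hUmono j0 (by linarith)
      have hlt : (∑ j, U j (pd' j)) < ∑ j, U j (pd2 j) := by
        have hsd := Finset.sum_sub_distrib (f := fun j => U j (pd2 j))
          (g := fun j => U j (pd' j)) (s := Finset.univ)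
        rw [hsd] at hdiff
        linarith
      have := hmin pg' pd2 v2 hfeas2
      linarith
    · -- Case 2: all demands at cap
      push_neg at hcase
      have hdeq : ∀ j, pd' j = pdM j := fun j => le_antisymm (hdbox j).2 (hcase j)
      have hkey : (∑ i, (pgm i - l i * (pgm i) ^ 2)) < ∑ i, (pg' i - l i * (pg' i) ^ 2) := by
        have h1 : (∑ i, (pg' i - v' i)) < ∑ i, (pg' i - l i * (pg' i) ^ 2) := by
          apply Finset.sum_lt_sum
          · intro i _; linarith [hvge i]
          · exact ⟨i0, Finset.mem_univ i0, by linarith⟩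
        have h2 : (∑ j, pd' j) = ∑ j, pdM j := Finset.sum_congr rfl (fun j _ => hdeq j)
        calc (∑ i, (pgm i - l i * (pgm i) ^ 2)) ≤ ∑ j, pdM j := hA4
          _ = ∑ j, pd' j := h2.symm
          _ = ∑ i, (pg' i - v' i) := hbal.symm
          _ < _ := h1
      have hex : ∃ i1, pgm i1 < pg' i1 := by
        by_contra hno
        push_neg at hno
        have heq : ∀ i, pg' i = pgm i := fun i => le_antisymm (hno i) (hgbox i).1
        have : (∑ i, (pgm i - l i * (pgm i) ^ 2)) = ∑ i, (pg' i - l i * (pg' i) ^ 2) :=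
          Finset.sum_congr rfl (fun i _ => by rw [heq i])
        linarith
      obtain ⟨i1, hi1⟩ := hex
      set a := pg' i1 with ha
      set c := l i1 * (2 * |a| + 1) with hc
      have hcnn : 0 ≤ c := mul_nonneg (hl i1) (by positivity)
      set ε := min 1 (min (δ / (1 + c)) (a - pgm i1)) with hε
      have hεpos : 0 < ε := lt_min one_pos (lt_min (by positivity) (by linarith))
      have hε1 : ε ≤ 1 := min_le_left _ _
      have hεδ : (1 + c) * ε ≤ δ := by
        have h1 : ε ≤ δ / (1 + c) := le_trans (min_le_right _ _) (min_le_left _ _)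
        have h2 : (0:ℝ) < 1 + c := by linarith
        calc (1 + c) * ε ≤ (1 + c) * (δ / (1 + c)) :=
              mul_le_mul_of_nonneg_left h1 (le_of_lt h2)
          _ = δ := by field_simp
      have hεa : ε ≤ a - pgm i1 := le_trans (min_le_right _ _) (min_le_right _ _)
      have hquad : l i1 * (a - ε) ^ 2 ≤ l i1 * a ^ 2 + c * ε := by
        have h1 : -|a| ≤ a := neg_abs_le a
        have h2 : 0 ≤ |a| := abs_nonneg a
        have h3 := hl i1
        nlinarith [mul_nonneg h3 (mul_nonneg hεpos.le hεpos.le)]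
      set pg2 : Fin Ng → ℝ := fun i => pg' i - (if i = i1 then ε else 0) with hpg2
      set v2 : Fin Ng → ℝ := fun i =>
        v' i + (if i = i1 then c * ε else 0) - (if i = i0 then (1 + c) * ε else 0) with hv2
      have hfeas2 : ((∑ i, (pg2 i - v2 i)) = ∑ j, pd' j ∧
          (∀ i, pgm i ≤ pg2 i ∧ pg2 i ≤ pgM i) ∧
          (∀ j, pdm j ≤ pd' j ∧ pd' j ≤ pdM j) ∧
          (∀ i, l i * (pg2 i) ^ 2 ≤ v2 i)) := by
        refine ⟨?_, ?_, hdbox, ?_⟩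
        · have h1 : (∑ i, (pg2 i - v2 i)) = (∑ i, (pg' i - v' i))
              + ∑ i, ((if i = i0 then (1 + c) * ε else 0)
                - (if i = i1 then ε else 0) - (if i = i1 then c * ε else 0)) := by
            rw [← Finset.sum_add_distrib]; apply Finset.sum_congr rfl; intro i _
            simp only [hpg2, hv2]; ring
          rw [h1, ← hbal]
          have h2 : (∑ i, ((if i = i0 then (1 + c) * ε else 0)
              - (if i = i1 then ε else 0) - (if i = i1 then c * ε else 0))) = 0 := by
            rw [Finset.sum_sub_distrib, Finset.sum_sub_distrib]
            simp [Finset.sum_ite_eq']; ring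
          rw [h2]; ring
        · intro i
          by_cases hi : i = i1
          · have hp : pg2 i = a - ε := by simp only [hpg2]; rw [if_pos hi, hi, ← ha]
            rw [hp, hi]
            refine ⟨by linarith, ?_⟩
            have := (hgbox i1).2
            rw [← ha] at this
            linarith
          · have hp : pg2 i = pg' i := by simp only [hpg2]; rw [if_neg hi]; ring
            rw [hp]; exact hgbox i
        · intro i
          by_cases hi : i = i1
          · have hp : pg2 i = a - ε := by simp only [hpg2]; rw [if_pos hi, hi, ← ha]
            by_cases h10 : i = i0
            · have hv : v2 i = v' i + c * ε - (1 + c) * ε := by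
                simp only [hv2]; rw [if_pos hi, if_pos h10]
              have hδ1 : v' i = l i * (pg' i) ^ 2 + δ := by rw [h10, hδdef]; ring
              rw [hp, hv, hδ1, hi, ← ha]
              linarith [hquad, hεδ]
            · have hv : v2 i = v' i + c * ε := by
                simp only [hv2]; rw [if_pos hi, if_neg h10]; ring
              have hvg : l i1 * a ^ 2 ≤ v' i1 := by rw [ha]; exact hvge i1
              rw [hp, hv, hi]
              linarith [hquad]
          · have hp : pg2 i = pg' i := by simp only [hpg2]; rw [if_neg hi]; ring
            by_cases h10 : i = i0
            · have hv : v2 i = v' i - (1 + c) * ε := by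
                simp only [hv2]; rw [if_neg hi, if_pos h10]; ring
              have hδ1 : v' i = l i * (pg' i) ^ 2 + δ := by rw [h10, hδdef]; ring
              rw [hp, hv, hδ1]
              linarith [hεδ]
            · have hv : v2 i = v' i := by simp only [hv2]; rw [if_neg hi, if_neg h10]; ring
              rw [hp, hv]; exact hvge i
      have hdiff : (∑ i, (C i (pg' i) - C i (pg2 i))) = C i1 (pg' i1) - C i1 (pg2 i1) := by
        rw [Finset.sum_eq_single i1]
        · intro b _ hb
          have : pg2 b = pg' b := by simp only [hpg2]; rw [if_neg hb]; ring
          rw [this, sub_self]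
        · intro h; exact absurd (Finset.mem_univ i1) h
      have hp1 : pg2 i1 = a - ε := by simp [hpg2, ← ha]
      have hlt1 : C i1 (pg2 i1) < C i1 (pg' i1) := by
        rw [hp1, ← ha]; exact hCmono i1 (by linarith)
      have hlt : (∑ i, C i (pg2 i)) < ∑ i, C i (pg' i) := by
        have hsd := Finset.sum_sub_distrib (f := fun i => C i (pg' i))
          (g := fun i => C i (pg2 i)) (s := Finset.univ)
        rw [hsd] at hdiff
        linarith
      have := hmin pg2 pd' v2 hfeas2
      linarith
  refine ⟨tight, ?_, ?_⟩
  · rw [← hbal]; apply Finset.sum_congr rfl; intro i _; rw [tight i]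
  · intro pg pd ⟨hb, hg, hd⟩
    exact hmin pg pd (fun i => l i * (pg i) ^ 2) ⟨hb, hg, hd, fun i => le_refl _⟩
end
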